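/- Let Sys be an SPA process tree, a an action, B a nonempty a-synchronised set of leaves of Sys, and S the a-closure of B. Let r be the root of the smallest subtree of Sys containing all leaves of S. Then the subtree rooted at r is an a-scope of Sys, and S is exactly the set of leaves of that a-scope; in this sense the a-closure (the Involved Set) and the a-scope coincide. -/
import Mathlib


/-!
An SPA system is modelled as a finite binary process tree: leaves are
sequential processes, each internal node is a parallel composition operator
labelled with a synchronisation set of actions.  Nodes (subtrees) of the tree
are identified with their positions, encoded as lists of Booleans (directions
from the root); a node `p` contains a node `q` iff `p` is a prefix of `q`.
-/

namespace SPA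

/-- Binary process trees over a set of actions `Act`. -/
inductive PTree (Act : Type) : Type
  | leaf : PTree Act
  | node : Set Act → PTree Act → PTree Act → PTree Act

variable {Act : Type}

/-- The subtree of a tree at a given position (if the position is valid). -/
def subtreeAt : PTree Act → List Bool → Option (PTree Act)
  | t, [] => some t
  | .leaf, _ :: _ => none
  | .node _ l r, b :: p => subtreeAt (if b then r else l) p

/-- `p` is a (valid position of a) node of `Sys`. -/
def IsNode (Sys : PTree Act) (p : List Bool) : Prop :=
  (subtreeAt Sys p).isSome

/-- `p` is a leaf of `Sys`, i.e. a sequential process. -/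
def IsLeaf (Sys : PTree Act) (p : List Bool) : Prop :=
  subtreeAt Sys p = some .leaf

/-- The node at position `p` is an internal node of type `||_a`
(its synchronisation set contains `a`). -/
def SyncAt (Sys : PTree Act) (p : List Bool) (a : Act) : Prop :=
  ∃ A l r, subtreeAt Sys p = some (.node A l r) ∧ a ∈ A

/-- The node at position `p` is an internal node of type `||_{¬a}`
(its synchronisation set does not contain `a`). -/
def NSyncAt (Sys : PTree Act) (p : List Bool) (a : Act) : Prop :=
  ∃ A l r, subtreeAt Sys p = some (.node A l r) ∧ a ∉ A

/-- Two nodes are disjoint iff neither subtree contains the other. -/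
def DisjointNodes (p q : List Bool) : Prop :=
  ¬ p <+: q ∧ ¬ q <+: p

/-- The longest common prefix of two positions: the join (lowest common
ancestor) of the two nodes, i.e. the root of the smallest subtree
containing both. -/
def lcp : List Bool → List Bool → List Bool
  | a :: as, b :: bs => if a = b then a :: lcp as bs else []
  | _, _ => []

/-- `q` lies strictly between `r` and `x` on the path from `r` down to `x`
(exclusive of both endpoints). -/
def StrictlyBetween (r x q : List Bool) : Prop :=
  r <+: q ∧ q <+: x ∧ q ≠ r ∧ q ≠ x

/-- The set of leaves of the subtree rooted at `p`. -/
def LeavesUnder (Sys : PTree Act) (p : List Bool) : Set (List Bool) :=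
  {q | p <+: q ∧ IsLeaf Sys q}


/-- An `a`-scope of `Sys`: either a subtree rooted at an internal node of type
`||_a`, or a single leaf, such that in either case every node strictly above it
(on the path to the root of `Sys`) is of type `||_{¬a}`. -/
def AScope (Sys : PTree Act) (a : Act) (p : List Bool) : Prop :=
  (SyncAt Sys p a ∨ IsLeaf Sys p) ∧
    ∀ q, q <+: p → q ≠ p → NSyncAt Sys q a

/-- A set `B` of leaves is `a`-synchronised: the join of every pair of distinct
leaves of `B` is of type `||_a`. -/
def ASynchronised (Sys : PTree Act) (a : Act) (B : Set (List Bool)) : Prop :=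
  ∀ P ∈ B, ∀ Q ∈ B, P ≠ Q → SyncAt Sys (lcp P Q) a

/-- The `a`-closure of a set `B` of leaves: the least set containing `B` and
closed under the rule: if `P` is in the set and `Q` is a leaf distinct from `P`
whose join with `P` is of type `||_a`, then `Q` is in the set.
(This models the Involved Set of a transition.) -/
inductive AClosure (Sys : PTree Act) (a : Act) (B : Set (List Bool)) : List Bool → Prop
  | base {P : List Bool} : P ∈ B → AClosure Sys a B P
  | step {P Q : List Bool} : AClosure Sys a B P → IsLeaf Sys Q → Q ≠ P →
      SyncAt Sys (lcp P Q) a → AClosure Sys a B Q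

/-- `r` is the root of the smallest subtree containing all positions of `S`:
`r` is a common ancestor of all of `S`, and every common ancestor of all of `S`
contains the node `r`. -/
def IsJoinOf (S : Set (List Bool)) (r : List Bool) : Prop :=
  (∀ P ∈ S, r <+: P) ∧ ∀ q, (∀ P ∈ S, q <+: P) → q <+: r


/-! ### Auxiliary lemmas -/

theorem subtreeAt_append (t : PTree Act) (p q : List Bool) :
    subtreeAt t (p ++ q) = (subtreeAt t p).bind (fun s => subtreeAt s q) := by
  induction p generalizing t with
  | nil => simp [subtreeAt]
  | cons b p ih =>
    cases t with
    | leaf => simp [subtreeAt]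
    | node A l r => simp [subtreeAt, ih]

theorem isSome_of_prefix' {Sys : PTree Act} {p q : List Bool}
    (h : (subtreeAt Sys q).isSome) (hpq : p <+: q) : (subtreeAt Sys p).isSome := by
  obtain ⟨u, rfl⟩ := hpq
  rw [subtreeAt_append] at h
  cases hs : subtreeAt Sys p <;> simp [hs] at h ⊢

theorem leaf_no_extension {Sys : PTree Act} {p q : List Bool}
    (hp : IsLeaf Sys p) (hpq : p <+: q) (hq : (subtreeAt Sys q).isSome) : q = p := by
  obtain ⟨u, rfl⟩ := hpq
  rw [subtreeAt_append, hp] at hq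
  cases u with
  | nil => simp
  | cons b u => simp [subtreeAt] at hq

theorem internal_of_strict_prefix {Sys : PTree Act} {p q : List Bool}
    (hq : (subtreeAt Sys q).isSome) (hpq : p <+: q) (hne : p ≠ q) :
    ∃ A l r, subtreeAt Sys p = some (.node A l r) := by
  have hp := isSome_of_prefix' hq hpq
  obtain ⟨t, ht⟩ := Option.isSome_iff_exists.mp hp
  cases t with
  | node A l r => exact ⟨A, l, r, ht⟩
  | leaf => exact absurd (leaf_no_extension ht hpq hq).symm hne

theorem sync_or_nsync {Sys : PTree Act} {p q : List Bool} (a : Act)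
    (hq : (subtreeAt Sys q).isSome) (hpq : p <+: q) (hne : p ≠ q) :
    SyncAt Sys p a ∨ NSyncAt Sys p a := by
  obtain ⟨A, l, r, h⟩ := internal_of_strict_prefix hq hpq hne
  by_cases ha : a ∈ A
  · exact Or.inl ⟨A, l, r, h, ha⟩
  · exact Or.inr ⟨A, l, r, h, ha⟩

theorem not_sync_and_nsync {Sys : PTree Act} {p : List Bool} {a : Act}
    (h1 : SyncAt Sys p a) (h2 : NSyncAt Sys p a) : False := by
  obtain ⟨A, l, r, h, ha⟩ := h1
  obtain ⟨A', l', r', h', ha'⟩ := h2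
  rw [h] at h'
  simp only [Option.some.injEq, PTree.node.injEq] at h'
  obtain ⟨rfl, -, -⟩ := h'
  exact ha' ha

theorem lcp_prefix_left (P Q : List Bool) : lcp P Q <+: P := by
  induction P generalizing Q with
  | nil => cases Q <;> simp [lcp]
  | cons a as ih =>
    cases Q with
    | nil => simp [lcp]
    | cons b bs =>
      simp only [lcp]
      split
      · next h => exact List.cons_prefix_cons.mpr ⟨rfl, ih bs⟩
      · exact List.nil_prefix

theorem lcp_prefix_right (P Q : List Bool) : lcp P Q <+: Q := by
  induction P generalizing Q with
  | nil => cases Q <;> simp [lcp]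
  | cons a as ih =>
    cases Q with
    | nil => simp [lcp]
    | cons b bs =>
      simp only [lcp]
      split
      · next h => exact List.cons_prefix_cons.mpr ⟨h, ih bs⟩
      · exact List.nil_prefix

theorem prefix_lcp {q : List Bool} : ∀ {P Q : List Bool}, q <+: P → q <+: Q → q <+: lcp P Q := by
  induction q with
  | nil => intro P Q _ _; exact List.nil_prefix
  | cons a as ih =>
    intro P Q h1 h2
    obtain ⟨u, rfl⟩ := h1
    obtain ⟨v, rfl⟩ := h2
    simp only [List.cons_append, lcp, if_pos rfl]
    exact List.cons_prefix_cons.mpr ⟨rfl, ih (as.prefix_append u) (as.prefix_append v)⟩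

theorem lcp_append (s u v : List Bool) : lcp (s ++ u) (s ++ v) = s ++ lcp u v := by
  induction s with
  | nil => rfl
  | cons a as ih => simp [lcp, ih]

theorem lcp_self (P : List Bool) : lcp P P = P := by
  induction P with
  | nil => rfl
  | cons a as ih => simp [lcp, ih]

theorem lcp_diverge {c d : Bool} (s u v : List Bool) (h : c ≠ d) :
    lcp (s ++ c :: u) (s ++ d :: v) = s := by
  rw [lcp_append]
  simp [lcp, h]

theorem prefix_antisymm {p q : List Bool} (h1 : p <+: q) (h2 : q <+: p) : p = q :=
  h1.eq_of_length (le_antisymm h1.length_le h2.length_le)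

theorem exists_leaf : ∀ t : PTree Act, ∃ p, subtreeAt t p = some .leaf
  | .leaf => ⟨[], rfl⟩
  | .node A l r =>
    let ⟨p, hp⟩ := exists_leaf l
    ⟨false :: p, by simpa [subtreeAt] using hp⟩

theorem exists_leaf_under {Sys : PTree Act} {q : List Bool} {t : PTree Act}
    (h : subtreeAt Sys q = some t) : ∃ P, q <+: P ∧ IsLeaf Sys P := by
  obtain ⟨p, hp⟩ := exists_leaf t
  exact ⟨q ++ p, List.prefix_append _ _, by rw [IsLeaf, subtreeAt_append, h]; exact hp⟩

/-- Let `B` be a nonempty `a`-synchronised set of leaves, `S` its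
`a`-closure and `r` the root of the smallest subtree containing all leaves of
`S`.  Then the subtree rooted at `r` is an `a`-scope of `Sys`, and `S` is
exactly the set of leaves of that `a`-scope: the `a`-closure (Involved Set) and
the `a`-scope coincide. -/
theorem closure_is_ascope (Sys : PTree Act) (a : Act) (B : Set (List Bool))
    (hBne : B.Nonempty) (hBleaf : ∀ P ∈ B, IsLeaf Sys P)
    (hBsync : ASynchronised Sys a B)
    (r : List Bool) (hr : IsJoinOf {P | AClosure Sys a B P} r) :
    AScope Sys a r ∧ {P | AClosure Sys a B P} = LeavesUnder Sys r := by
  classical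
  obtain ⟨P₀, hP₀B⟩ := hBne
  have hP₀S : AClosure Sys a B P₀ := .base hP₀B
  have hP₀leaf : IsLeaf Sys P₀ := hBleaf _ hP₀B
  have hP₀some : (subtreeAt Sys P₀).isSome := by rw [hP₀leaf]; rfl
  have hSleaf : ∀ P, AClosure Sys a B P → IsLeaf Sys P := by
    intro P h
    induction h with
    | base hB => exact hBleaf _ hB
    | step _ hQ _ _ _ => exact hQ
  by_cases hex : ∃ n, SyncAt Sys (P₀.take n) a
  · -- Case 1: some ancestor of P₀ is of type ||_a; let s be the topmost one.
    set N := Nat.find hex with hN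
    have hsSync : SyncAt Sys (P₀.take N) a := Nat.find_spec hex
    set s : List Bool := P₀.take N with hs
    have hsP₀ : s <+: P₀ := List.take_prefix _ _
    have hslen : s.length ≤ N := by rw [hs]; simp [List.length_take]
    have hmin : ∀ q, q <+: P₀ → SyncAt Sys q a → s <+: q := by
      intro q hq hqa
      have hqt : q = P₀.take q.length := List.prefix_iff_eq_take.mp hq
      have hNle : N ≤ q.length := Nat.find_min' hex (by rw [← hqt]; exact hqa)
      exact List.prefix_of_prefix_length_le hsP₀ hq (le_trans hslen hNle)
    have hns : ∀ q, q <+: s → q ≠ s → NSyncAt Sys q a := by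
      intro q hq hne
      have hqP : q <+: P₀ := hq.trans hsP₀
      have hqneP : q ≠ P₀ := by
        intro h; subst h
        exact hne (prefix_antisymm hq hsP₀)
      rcases sync_or_nsync a hP₀some hqP hqneP with h | h
      · exact absurd (prefix_antisymm hq (hmin q hqP h)) hne
      · exact h
    obtain ⟨A, l0, r0, hnode, haA⟩ := hsSync
    have hsSync' : SyncAt Sys s a := ⟨A, l0, r0, hnode, haA⟩
    have hsneP₀ : s ≠ P₀ := by
      intro h; rw [h, hP₀leaf] at hnode; simp at hnode
    obtain ⟨rest, hrest⟩ := hsP₀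
    cases rest with
    | nil => exact absurd (by simpa using hrest) hsneP₀
    | cons b rest' =>
      have hsP₀' : s <+: P₀ := ⟨b :: rest', hrest⟩
      have hchild : subtreeAt Sys (s ++ [!b]) = some (if !b then r0 else l0) := by
        rw [subtreeAt_append, hnode]; simp [subtreeAt]
      obtain ⟨Q', hsbQ', hQ'leaf⟩ := exists_leaf_under hchild
      obtain ⟨v, hv⟩ := hsbQ'
      have hQ'form : Q' = s ++ (!b) :: v := by rw [← hv]; simp
      have hbne : b ≠ !b := by cases b <;> simp
      have hbne' : (!b) ≠ b := by cases b <;> simp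
      have hlcpPQ' : lcp P₀ Q' = s := by
        rw [← hrest, hQ'form]; exact lcp_diverge s rest' v hbne
      have hQ'neP₀ : Q' ≠ P₀ := by
        intro h
        rw [hQ'form, ← hrest] at h
        have h' := List.append_cancel_left h
        simp only [List.cons.injEq] at h'
        exact hbne' h'.1
      have hQ'S : AClosure Sys a B Q' :=
        .step hP₀S hQ'leaf hQ'neP₀ (by rw [hlcpPQ']; exact hsSync')
      -- every leaf under s is in the closure
      have h1 : ∀ Q, s <+: Q → IsLeaf Sys Q → AClosure Sys a B Q := by
        intro Q hsQ hQleaf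
        obtain ⟨u, hu⟩ := hsQ
        cases u with
        | nil =>
          exfalso
          have hQs : s = Q := by simpa using hu
          rw [← hQs] at hQleaf
          have : some (PTree.node A l0 r0) = some (PTree.leaf (Act := Act)) :=
            hnode.symm.trans hQleaf
          simp at this
        | cons c u' =>
          by_cases hc : c = b
          · subst hc
            have hlcp : lcp Q' Q = s := by
              rw [hQ'form, ← hu]; exact lcp_diverge s v u' hbne'
            have hne : Q ≠ Q' := by
              intro h
              rw [hQ'form, ← hu] at h
              have h' := List.append_cancel_left h
              simp only [List.cons.injEq] at h'
              exact hbne h'.1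
            exact .step hQ'S hQleaf hne (by rw [hlcp]; exact hsSync')
          · have hc' : c = !b := by revert hc; cases c <;> cases b <;> decide
            subst hc'
            have hlcp : lcp P₀ Q = s := by
              rw [← hrest, ← hu]; exact lcp_diverge s rest' u' hbne
            have hne : Q ≠ P₀ := by
              intro h
              rw [← hrest, ← hu] at h
              have h' := List.append_cancel_left h
              simp only [List.cons.injEq] at h'
              exact hbne' h'.1
            exact .step hP₀S hQleaf hne (by rw [hlcp]; exact hsSync')
      -- every member of the closure is under s
      have h2 : ∀ P, AClosure Sys a B P → s <+: P := by
        intro P h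
        induction h with
        | @base P hPB =>
          by_cases hPP : P = P₀
          · rw [hPP]; exact hsP₀'
          · have hsync := hBsync P₀ hP₀B P hPB (Ne.symm hPP)
            exact (hmin _ (lcp_prefix_left P₀ P) hsync).trans (lcp_prefix_right P₀ P)
        | @step P Q hP hQleaf hne hsync ih =>
          rcases le_total s.length (lcp P Q).length with hl | hl
          · exact (List.prefix_of_prefix_length_le ih (lcp_prefix_left P Q) hl).trans
              (lcp_prefix_right P Q)
          · have hle : lcp P Q <+: s :=
              List.prefix_of_prefix_length_le (lcp_prefix_left P Q) ih hl
            by_cases heq : lcp P Q = s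
            · exact heq ▸ lcp_prefix_right P Q
            · exact absurd hsync (fun hh => not_sync_and_nsync hh (hns _ hle heq))
      have hSeq : {P | AClosure Sys a B P} = LeavesUnder Sys s := by
        ext Q
        constructor
        · intro h; exact ⟨h2 Q h, hSleaf Q h⟩
        · rintro ⟨ha1, ha2⟩; exact h1 Q ha1 ha2
      have hrs : r = s := by
        have hsr : s <+: r := hr.2 s (fun P hP => h2 P hP)
        have hrP₀ : r <+: P₀ := hr.1 P₀ hP₀S
        have hrQ' : r <+: Q' := hr.1 Q' hQ'S
        have hrlcp : r <+: lcp P₀ Q' := prefix_lcp hrP₀ hrQ'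
        rw [hlcpPQ'] at hrlcp
        exact prefix_antisymm hrlcp hsr
      rw [hrs]
      exact ⟨⟨Or.inl hsSync', fun q hq hne => hns q hq hne⟩, hSeq⟩
  · -- Case 2: no ancestor of P₀ is of type ||_a; the closure is {P₀}.
    have hno : ∀ q, q <+: P₀ → ¬ SyncAt Sys q a := fun q hq hqa =>
      hex ⟨q.length, by rw [← List.prefix_iff_eq_take.mp hq]; exact hqa⟩
    have hSP : ∀ P, AClosure Sys a B P → P = P₀ := by
      intro P h
      induction h with
      | @base P hPB =>
        by_contra hPP
        exact hno _ (lcp_prefix_left P₀ P) (hBsync P₀ hP₀B P hPB (Ne.symm hPP))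
      | @step P Q hP hQleaf hne hsync ih =>
        rw [ih] at hsync
        exact absurd hsync (hno _ (lcp_prefix_left P₀ Q))
    have hrP : r = P₀ := by
      have ha1 : r <+: P₀ := hr.1 P₀ hP₀S
      have ha2 : P₀ <+: r := hr.2 P₀ (fun P hP => by rw [hSP P hP])
      exact prefix_antisymm ha1 ha2
    rw [hrP]
    constructor
    · refine ⟨Or.inr hP₀leaf, fun q hq hne => ?_⟩
      rcases sync_or_nsync a hP₀some hq hne with h | h
      · exact absurd h (hno q hq)
      · exact h
    · ext Q
      constructor
      · intro h
        have hq := hSP Q h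
        rw [hq]
        exact ⟨List.prefix_rfl, hP₀leaf⟩
      · rintro ⟨ha1, ha2⟩
        have hQe : Q = P₀ := leaf_no_extension hP₀leaf ha1 (by rw [ha2]; rfl)
        rw [Set.mem_setOf_eq, hQe]
        exact hP₀S

end SPA
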